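/- arXiv:1805.03335 — 5 statements merged into one kernel-verified Lean document; each statement's English description precedes it below -/
import Mathlib

section
/- For every k ≥ 0, the perfect domination number of the (6k+1)×2 knights graph equals 4k+2. -/
/-! On a board with two rows a knight switches rows and moves two columns, so `KN n 2` is the
disjoint union of four paths, sorted by the parity of the column `x` and of `⌊x / 2⌋ + y`; for
`n = 6k + 1` two of them have `3k + 1` squares and two have `3k`. A square dominates at most three
squares of its path, so a dominating set has at least `2(k + 1) + 2k = 4k + 2` elements. The
squares in the columns `x ≡ 0 (mod 3)` form a perfect dominating set of that size. -/

def knightAdj (p q : ℤ × ℤ) : Prop :=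
  (|p.1 - q.1| = 1 ∧ |p.2 - q.2| = 2) ∨ (|p.1 - q.1| = 2 ∧ |p.2 - q.2| = 1)

lemma knightAdj_symm {p q : ℤ × ℤ} (h : knightAdj p q) : knightAdj q p := by
  unfold knightAdj at *
  rcases h with ⟨h1, h2⟩ | ⟨h1, h2⟩
  · left; rw [abs_sub_comm, abs_sub_comm q.2]; exact ⟨h1, h2⟩
  · right; rw [abs_sub_comm, abs_sub_comm q.2]; exact ⟨h1, h2⟩

lemma knightAdj_irrefl (p : ℤ × ℤ) : ¬ knightAdj p p := by
  unfold knightAdj; simp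

/-- The knights graph on an `n`-column, `m`-row chessboard. -/
def KN (n m : ℕ) : SimpleGraph (Fin n × Fin m) where
  Adj p q := knightAdj ((p.1 : ℤ), (p.2 : ℤ)) ((q.1 : ℤ), (q.2 : ℤ))
  symm := ⟨fun _ _ h => knightAdj_symm h⟩
  loopless := ⟨fun p => knightAdj_irrefl _⟩

/-- The infinite knights graph on `ℤ × ℤ`. -/
def KNZZ : SimpleGraph (ℤ × ℤ) where
  Adj := knightAdj
  symm := ⟨fun _ _ h => knightAdj_symm h⟩
  loopless := ⟨knightAdj_irrefl⟩

/-- The quarter-infinite knights graph on `ℕ × ℕ`. -/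
def KNNN : SimpleGraph (ℕ × ℕ) where
  Adj p q := knightAdj ((p.1 : ℤ), (p.2 : ℤ)) ((q.1 : ℤ), (q.2 : ℤ))
  symm := ⟨fun _ _ h => knightAdj_symm h⟩
  loopless := ⟨fun p => knightAdj_irrefl _⟩

/-- The half-plane knights graph on `ℤ × ℕ`. -/
def KNZN : SimpleGraph (ℤ × ℕ) where
  Adj p q := knightAdj (p.1, (p.2 : ℤ)) (q.1, (q.2 : ℤ))
  symm := ⟨fun _ _ h => knightAdj_symm h⟩
  loopless := ⟨fun p => knightAdj_irrefl _⟩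

/-- `S` is a perfect dominating set of `G`: every vertex not in `S` is adjacent to
exactly one vertex of `S`. -/
def IsPerfDomSet {V : Type*} (G : SimpleGraph V) (S : Set V) : Prop :=
  ∀ v ∉ S, ∃! u, u ∈ S ∧ G.Adj v u

/-- The perfect domination number of `G`. -/
noncomputable def perfDomNum {V : Type*} (G : SimpleGraph V) : ℕ :=
  sInf {k | ∃ S : Set V, IsPerfDomSet G S ∧ S.ncard = k}

namespace SimpleGraph

variable {V : Type*}

lemma IsPerfDomSet.exists_mem_eq_or_adj {G : SimpleGraph V} {S : Set V} (hS : IsPerfDomSet G S)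
    (v : V) : ∃ u ∈ S, v = u ∨ G.Adj v u := by
  by_cases hv : v ∈ S
  · exact ⟨v, hv, .inl rfl⟩
  · obtain ⟨u, ⟨hu, hvu⟩, -⟩ := hS v hv
    exact ⟨u, hu, .inr hvu⟩

lemma perfDomNum_eq_ncard {G : SimpleGraph V} {S : Set V} (hS : IsPerfDomSet G S)
    (hmin : ∀ T, IsPerfDomSet G T → S.ncard ≤ T.ncard) : perfDomNum G = S.ncard :=
  le_antisymm (Nat.sInf_le ⟨S, hS, rfl⟩)
    (le_csInf ⟨_, S, hS, rfl⟩ (by rintro _ ⟨T, hT, rfl⟩; exact hmin T hT))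

lemma card_le_mul_card_of_forall_exists_eq_or_adj [DecidableEq V] (G : SimpleGraph V)
    [G.LocallyFinite] {d : ℕ} (hdeg : ∀ v, G.degree v ≤ d) {C S : Finset V}
    (hdom : ∀ v ∈ C, ∃ u ∈ S, v = u ∨ G.Adj v u) : C.card ≤ (d + 1) * S.card := by
  have hcover : C ⊆ S.biUnion fun u => insert u (G.neighborFinset u) := by
    intro v hv
    obtain ⟨u, hu, hvu⟩ := hdom v hv
    simp only [Finset.mem_biUnion, Finset.mem_insert, mem_neighborFinset]
    exact ⟨u, hu, hvu.imp_right Adj.symm⟩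
  calc C.card ≤ ∑ u ∈ S, (insert u (G.neighborFinset u)).card :=
        (Finset.card_le_card hcover).trans Finset.card_biUnion_le
    _ ≤ ∑ _u ∈ S, (d + 1) := Finset.sum_le_sum fun u _ =>
        (Finset.card_insert_le _ _).trans (by simpa using hdeg u)
    _ = (d + 1) * S.card := by rw [Finset.sum_const, smul_eq_mul, mul_comm]

end SimpleGraph

open SimpleGraph

instance (n m : ℕ) : DecidableRel (KN n m).Adj := fun _ _ => by
  unfold KN knightAdj; infer_instance

namespace KN

variable {n : ℕ}

lemma two_adj_iff (v w : Fin n × Fin 2) :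
    (KN n 2).Adj v w ↔
      ((v.1 : ℕ) + 2 = w.1 ∨ (w.1 : ℕ) + 2 = v.1) ∧ (v.2 : ℕ) + w.2 = 1 := by
  change knightAdj _ _ ↔ _
  have := v.2.isLt; have := w.2.isLt
  simp only [knightAdj, abs_eq (zero_le_one' ℤ), abs_eq (zero_le_two (α := ℤ))]
  omega

lemma two_degree_le (v : Fin n × Fin 2) : (KN n 2).degree v ≤ 2 := by
  rw [← card_neighborFinset_eq_degree]
  refine Finset.card_le_card_of_injOn (t := (Finset.univ : Finset Bool))
    (fun w => decide ((w.1 : ℕ) < v.1)) (fun _ _ => Finset.mem_coe.2 (Finset.mem_univ _)) ?_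
  intro a ha b hb hab
  simp only [mem_neighborFinset, two_adj_iff, Finset.mem_coe] at ha hb
  simp only [decide_eq_decide] at hab
  have := a.2.isLt; have := b.2.isLt; have := v.2.isLt
  ext <;> omega

def twoClass (v : Fin n × Fin 2) : ℕ × ℕ :=
  ((v.1 : ℕ) % 2, ((v.1 : ℕ) / 2 + v.2) % 2)

lemma twoClass_eq_of_adj {v w : Fin n × Fin 2} (h : (KN n 2).Adj v w) :
    twoClass v = twoClass w := by
  rw [two_adj_iff] at h
  simp only [twoClass, Prod.mk.injEq]
  omega

lemma card_twoClass {ε j : ℕ} (hε : ε < 2) (hj : j < 2) :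
    (Finset.univ.filter fun v : Fin n × Fin 2 => twoClass v = (ε, j)).card
      = (n + 1 - ε) / 2 := by
  rw [← Finset.card_range ((n + 1 - ε) / 2)]
  refine Finset.card_bij' (fun v _ => (v.1 : ℕ) / 2)
    (fun m hm => (⟨2 * m + ε, by rw [Finset.mem_range] at hm; omega⟩, ⟨(j + m) % 2, by omega⟩))
    ?_ ?_ ?_ ?_ <;>
    simp only [Finset.mem_filter, Finset.mem_univ, true_and, Finset.mem_range, twoClass,
      Prod.mk.injEq]
  · intro v hv
    have := v.1.isLt
    omega
  · intro m hm
    omega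
  · intro v hv
    have := v.2.isLt
    ext <;> simp only <;> omega
  · intro m hm
    omega

lemma card_twoClass_le {S : Set (Fin n × Fin 2)} [Fintype S] (hS : IsPerfDomSet (KN n 2) S)
    (c : ℕ × ℕ) :
    (Finset.univ.filter fun v : Fin n × Fin 2 => twoClass v = c).card
      ≤ 3 * (S.toFinset.filter fun v => twoClass v = c).card := by
  refine card_le_mul_card_of_forall_exists_eq_or_adj (KN n 2) two_degree_le fun v hv => ?_
  obtain ⟨u, hu, hvu⟩ := hS.exists_mem_eq_or_adj v
  rw [Finset.mem_filter] at hv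
  refine ⟨u, Finset.mem_filter.2 ⟨Set.mem_toFinset.2 hu, ?_⟩, hvu⟩
  rcases hvu with rfl | hvu
  · exact hv.2
  · exact (twoClass_eq_of_adj hvu).symm.trans hv.2

lemma ncard_ge_of_isPerfDomSet {S : Set (Fin n × Fin 2)} (hS : IsPerfDomSet (KN n 2) S) :
    2 * ((n + 2) / 3) ≤ S.ncard := by
  classical
  have hsplit := Finset.card_eq_sum_card_fiberwise (s := S.toFinset) (f := twoClass)
    (t := Finset.range 2 ×ˢ Finset.range 2) fun _ _ =>
      Finset.mem_product.2 ⟨Finset.mem_range.2 (Nat.mod_lt _ two_pos),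
        Finset.mem_range.2 (Nat.mod_lt _ two_pos)⟩
  simp only [Finset.sum_product, Finset.sum_range_succ, Finset.sum_range_zero, zero_add]
    at hsplit
  have h00 := card_twoClass_le hS (0, 0)
  have h01 := card_twoClass_le hS (0, 1)
  have h10 := card_twoClass_le hS (1, 0)
  have h11 := card_twoClass_le hS (1, 1)
  simp only [card_twoClass zero_lt_two zero_lt_two, card_twoClass zero_lt_two one_lt_two,
    card_twoClass one_lt_two zero_lt_two, card_twoClass one_lt_two one_lt_two] at h00 h01 h10 h11
  rw [Set.ncard_eq_toFinset_card', hsplit]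
  obtain ⟨q, r, hr, rfl⟩ : ∃ q r, r < 6 ∧ n = 6 * q + r :=
    ⟨n / 6, n % 6, n.mod_lt (by norm_num), by omega⟩
  interval_cases r <;> omega

def everyThirdColumn (n : ℕ) : Set (Fin n × Fin 2) := {v | (v.1 : ℕ) % 3 = 0}

lemma isPerfDomSet_everyThirdColumn (hn : n % 3 = 1) :
    IsPerfDomSet (KN n 2) (everyThirdColumn n) := by
  intro v hv
  simp only [everyThirdColumn, Set.mem_ofPred_eq] at hv
  have := v.1.isLt
  obtain ⟨x, hxn, hx3, hvx⟩ : ∃ x < n, x % 3 = 0 ∧ ((v.1 : ℕ) + 2 = x ∨ x + 2 = v.1) := by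
    rcases (by omega : (v.1 : ℕ) % 3 = 1 ∨ (v.1 : ℕ) % 3 = 2) with h | h
    · exact ⟨v.1 + 2, by omega, by omega, .inl rfl⟩
    · exact ⟨v.1 - 2, by omega, by omega, .inr (by omega)⟩
  have := v.2.isLt
  refine ⟨(⟨x, hxn⟩, ⟨1 - v.2, by omega⟩), ⟨hx3, (two_adj_iff _ _).2 ⟨hvx, by simp; omega⟩⟩, ?_⟩
  rintro u ⟨hu, hvu⟩
  simp only [everyThirdColumn, Set.mem_ofPred_eq] at hu
  rw [two_adj_iff] at hvu
  ext <;> simp only <;> omega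

lemma ncard_everyThirdColumn : (everyThirdColumn n).ncard = 2 * ((n + 2) / 3) := by
  let f : Fin ((n + 2) / 3) × Fin 2 → Fin n × Fin 2 := fun p => (⟨3 * p.1, by omega⟩, p.2)
  have hf : Function.Injective f := by
    rintro ⟨a, b⟩ ⟨c, d⟩ h
    simp only [f, Prod.mk.injEq, Fin.mk.injEq] at h
    obtain ⟨h, rfl⟩ := h
    congr 1
    ext
    omega
  have himage : everyThirdColumn n = Set.range f := by
    ext v
    refine ⟨fun hv => ⟨(⟨v.1 / 3, by omega⟩, v.2), ?_⟩, ?_⟩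
    · simp only [everyThirdColumn, Set.mem_ofPred_eq] at hv
      refine Prod.ext (Fin.ext ?_) rfl
      simp only [f]
      omega
    · rintro ⟨p, rfl⟩
      simp [everyThirdColumn, f]
  rw [himage, Set.ncard_range_of_injective hf, Nat.card_eq_fintype_card, Fintype.card_prod,
    Fintype.card_fin, Fintype.card_fin, mul_comm]

end KN

theorem stmt1 (k : ℕ) : perfDomNum (KN (6 * k + 1) 2) = 4 * k + 2 := by
  have hn : (6 * k + 1) % 3 = 1 := by omega
  rw [perfDomNum_eq_ncard (KN.isPerfDomSet_everyThirdColumn hn)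
    fun T hT => KN.ncard_everyThirdColumn.trans_le (KN.ncard_ge_of_isPerfDomSet hT),
    KN.ncard_everyThirdColumn]
  omega
end

section
/- For every k ≥ 1 and every n with 6k−4 ≤ n ≤ 6k, the perfect domination number of the n×2 knights graph equals 4k. -/
/-!
On a board with two rows a knight moves two columns and switches row, so `KN n 2` is the
disjoint union of four paths: for each column parity `r` and each `s`, the cells `(a, b)` with
`a ≡ r` and `a / 2 + b ≡ s [MOD 2]`, in order of `a`. Two of them have `⌈n / 2⌉` vertices and two
have `⌊n / 2⌋`. A vertex of a path dominates at most three vertices of it, so a dominating set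
meets a path of `m` vertices in at least `⌈m / 3⌉` of them. Conversely every third vertex of a
path, suitably offset, is a perfect dominating set of that size, and taking the same positions
in the two paths of a column parity amounts to choosing whole columns. Hence
`γ_p(KN n 2) = 2 ⌈⌈n / 2⌉ / 3⌉ + 2 ⌈⌊n / 2⌋ / 3⌉`, which is `4 k` for `6 k - 4 ≤ n ≤ 6 k`.
-/

open Finset

lemma perfDomNum_eq_of_isPerfDomSet {V : Type*} {G : SimpleGraph V} {S : Set V} {k : ℕ}
    (hS : IsPerfDomSet G S) (hk : S.ncard = k) (hmin : ∀ T, IsPerfDomSet G T → k ≤ T.ncard) :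
    perfDomNum G = k :=
  le_antisymm (Nat.sInf_le ⟨S, hS, hk⟩)
    (le_csInf ⟨k, S, hS, hk⟩ fun _ ⟨T, hT, hTk⟩ => hTk ▸ hmin T hT)

namespace SimpleGraph

variable {V : Type*} [Fintype V] [DecidableEq V] (G : SimpleGraph V) [DecidableRel G.Adj]

theorem card_le_mul_card_inter_of_forall_exists_adj {d : ℕ} (hdeg : ∀ v, G.degree v ≤ d)
    {S C : Finset V} (hS : ∀ v ∉ S, ∃ u ∈ S, G.Adj v u) (hC : ∀ v ∈ C, ∀ u, G.Adj v u → u ∈ C) :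
    #C ≤ (d + 1) * #(S ∩ C) := by
  have hcover : C ⊆ S ∩ C ∪ (S ∩ C).biUnion (G.neighborFinset ·) := by
    intro v hv
    by_cases hvS : v ∈ S
    · exact mem_union_left _ (mem_inter.2 ⟨hvS, hv⟩)
    · obtain ⟨u, huS, hvu⟩ := hS v hvS
      exact mem_union_right _ (mem_biUnion.2
        ⟨u, mem_inter.2 ⟨huS, hC v hv u hvu⟩, (G.mem_neighborFinset u v).2 hvu.symm⟩)
  calc #C ≤ #(S ∩ C) + #((S ∩ C).biUnion (G.neighborFinset ·)) :=
        (card_le_card hcover).trans (card_union_le _ _)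
    _ ≤ #(S ∩ C) + ∑ u ∈ S ∩ C, d := by
        gcongr
        exact card_biUnion_le.trans (sum_le_sum fun u _ => hdeg u)
    _ = (d + 1) * #(S ∩ C) := by rw [sum_const, smul_eq_mul]; ring

end SimpleGraph

lemma KN_two_adj_iff {n : ℕ} {p q : Fin n × Fin 2} :
    (KN n 2).Adj p q ↔ ((p.1 : ℕ) + 2 = q.1 ∨ (q.1 : ℕ) + 2 = p.1) ∧ (p.2 : ℕ) ≠ q.2 := by
  have hp := p.2.isLt
  have hq := q.2.isLt
  change knightAdj _ _ ↔ _
  simp only [knightAdj, abs_eq (zero_le_one' ℤ), abs_eq (by norm_num : (0 : ℤ) ≤ 2)]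
  omega

lemma KN_two_degree_le {n : ℕ} [DecidableRel (KN n 2).Adj] (v : Fin n × Fin 2) :
    (KN n 2).degree v ≤ 2 := by
  have hinj : Set.InjOn (fun u : Fin n × Fin 2 => decide (u.1 < v.1))
      ((KN n 2).neighborFinset v) := by
    intro u hu w hw huw
    simp only [SimpleGraph.coe_neighborFinset, SimpleGraph.mem_neighborSet, KN_two_adj_iff,
      decide_eq_decide, Fin.lt_def] at hu hw huw
    ext <;> omega
  simpa using card_le_card_of_injOn _ (fun _ _ => mem_univ _) hinj

def knightClass {n : ℕ} (v : Fin n × Fin 2) : ℕ × ℕ := (v.1 % 2, (v.1 / 2 + v.2) % 2)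

lemma knightClass_eq_of_adj {n : ℕ} {v u : Fin n × Fin 2} (h : (KN n 2).Adj v u) :
    knightClass u = knightClass v := by
  have hv := v.2.isLt
  have hu := u.2.isLt
  rw [KN_two_adj_iff] at h
  simp only [knightClass, Prod.mk.injEq]
  omega

lemma card_eq_sum_card_knightClass {n : ℕ} (T : Finset (Fin n × Fin 2)) :
    #T = ∑ r ∈ range 2, ∑ s ∈ range 2, #{v ∈ T | knightClass v = (r, s)} := by
  rw [← sum_product', card_eq_sum_card_fiberwise (t := range 2 ×ˢ range 2)]
  intro v _
  simp only [knightClass, coe_product, coe_range, Set.mem_prod, Set.mem_Iio]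
  omega

lemma card_filter_knightClass {n r s : ℕ} (hr : r < 2) (hs : s < 2) (P : ℕ → Prop)
    [DecidablePred P] :
    #{v : Fin n × Fin 2 | knightClass v = (r, s) ∧ P (v.1 / 2)} =
      #{j ∈ range ((n + 1 - r) / 2) | P j} := by
  refine card_bij' (fun v _ => v.1 / 2)
    (fun j hj => (⟨2 * j + r, ?_⟩, ⟨(j + s) % 2, Nat.mod_lt _ two_pos⟩)) ?_ ?_ ?_ ?_
  · simp only [mem_filter, mem_range] at hj
    omega
  all_goals
    intro v hv
    simp only [mem_filter, mem_univ, true_and, mem_range, knightClass, Prod.mk.injEq] at hv ⊢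
  · have := v.1.isLt
    exact ⟨by omega, hv.2⟩
  · refine ⟨⟨by omega, by omega⟩, ?_⟩
    rw [show (2 * v + r) / 2 = v by omega]
    exact hv.2
  · have := v.2.isLt
    ext <;> dsimp only <;> omega
  · omega

-- On the path `0, …, m - 1` the positions `≡ 1 [MOD 3]` dominate perfectly unless
-- `m ≡ 1 [MOD 3]`, when they miss `m - 1`; then the positions `≡ 0` do.
def pathDomOffset (m : ℕ) : ℕ := if m % 3 = 1 then 0 else 1

lemma card_filter_modEq_pathDomOffset (m : ℕ) :
    #{j ∈ range m | j ≡ pathDomOffset m [MOD 3]} = (m + 2) / 3 := by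
  rw [← Nat.count_eq_card_filter_range, Nat.count_modEq_card _ three_pos]
  unfold pathDomOffset
  split_ifs <;> omega

-- Column `a` carries position `a / 2` of both paths through the columns of its parity, and these
-- paths have `(n + 1 - a % 2) / 2` vertices.
def IsDomColumn (n a : ℕ) : Prop := a / 2 ≡ pathDomOffset ((n + 1 - a % 2) / 2) [MOD 3]

instance (n a : ℕ) : Decidable (IsDomColumn n a) := by unfold IsDomColumn; infer_instance

lemma isDomColumn_sub_two_iff_not_add_two {n a : ℕ} (ha : a < n) (h : ¬ IsDomColumn n a) :
    (2 ≤ a ∧ IsDomColumn n (a - 2)) ↔ ¬ (a + 2 < n ∧ IsDomColumn n (a + 2)) := by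
  unfold IsDomColumn pathDomOffset Nat.ModEq at *
  split_ifs at * <;> omega

lemma isPerfDomSet_KN_two_of_columns {n : ℕ} {A : ℕ → Prop}
    (hA : ∀ a < n, ¬ A a → ((2 ≤ a ∧ A (a - 2)) ↔ ¬ (a + 2 < n ∧ A (a + 2)))) :
    IsPerfDomSet (KN n 2) {v | A v.1} := by
  rintro ⟨a, b⟩ hv
  have hb := b.isLt
  have hlr := hA a a.isLt hv
  by_cases hl : 2 ≤ (a : ℕ) ∧ A (a - 2)
  · refine ⟨(⟨a - 2, by omega⟩, ⟨1 - (b : ℕ), by omega⟩),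
      ⟨hl.2, KN_two_adj_iff.2 ⟨by dsimp only; omega, by dsimp only; omega⟩⟩, ?_⟩
    rintro ⟨c, d⟩ ⟨hc, hadj⟩
    rw [KN_two_adj_iff] at hadj
    dsimp only at hadj
    have hd := d.isLt
    have : (c : ℕ) + 2 = a := by
      refine hadj.1.resolve_left fun h => hlr.1 hl ⟨by omega, ?_⟩
      rw [h]
      exact hc
    ext <;> dsimp only <;> omega
  · have hr := not_not.1 (mt hlr.2 hl)
    refine ⟨(⟨a + 2, hr.1⟩, ⟨1 - (b : ℕ), by omega⟩),
      ⟨hr.2, KN_two_adj_iff.2 ⟨Or.inl rfl, by dsimp only; omega⟩⟩, ?_⟩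
    rintro ⟨c, d⟩ ⟨hc, hadj⟩
    rw [KN_two_adj_iff] at hadj
    dsimp only at hadj
    have hd := d.isLt
    have : (c : ℕ) = a + 2 := by
      refine (hadj.1.resolve_right fun h => hl ⟨by omega, ?_⟩).symm
      rw [← h, Nat.add_sub_cancel]
      exact hc
    ext <;> dsimp only <;> omega

lemma ncard_setOf_isDomColumn (n : ℕ) :
    {v : Fin n × Fin 2 | IsDomColumn n v.1}.ncard =
      2 * (((n + 1) / 2 + 2) / 3 + (n / 2 + 2) / 3) := by
  have hclass : ∀ r ∈ range 2, ∀ s ∈ range 2,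
      #{v ∈ ({v | IsDomColumn n v.1} : Finset (Fin n × Fin 2)) | knightClass v = (r, s)} =
        ((n + 1 - r) / 2 + 2) / 3 := by
    intro r hr s hs
    rw [← card_filter_modEq_pathDomOffset,
      ← card_filter_knightClass (mem_range.1 hr) (mem_range.1 hs), filter_filter]
    congr 1
    refine filter_congr fun v _ => ?_
    simp only [knightClass, Prod.mk.injEq, IsDomColumn]
    constructor
    · rintro ⟨hdom, hr, hs⟩
      exact ⟨⟨hr, hs⟩, hr ▸ hdom⟩
    · rintro ⟨⟨hr, hs⟩, hdom⟩
      exact ⟨hr ▸ hdom, hr, hs⟩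
  rw [Set.ncard_eq_toFinset_card', Set.toFinset_ofPred, card_eq_sum_card_knightClass,
    sum_congr rfl fun r hr => sum_congr rfl fun s hs => hclass r hr s hs]
  simp only [sum_range_succ, sum_range_zero, zero_add]
  omega

lemma le_ncard_of_isPerfDomSet_KN_two {n : ℕ} {S : Set (Fin n × Fin 2)}
    (hS : IsPerfDomSet (KN n 2) S) : 2 * (((n + 1) / 2 + 2) / 3 + (n / 2 + 2) / 3) ≤ S.ncard := by
  classical
  have hdom : ∀ v ∉ S.toFinset, ∃ u ∈ S.toFinset, (KN n 2).Adj v u := fun v hv => by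
    obtain ⟨u, ⟨huS, hvu⟩, -⟩ := hS v (by simpa using hv)
    exact ⟨u, by simpa using huS, hvu⟩
  have hclass : ∀ r ∈ range 2, ∀ s ∈ range 2,
      ((n + 1 - r) / 2 + 2) / 3 ≤ #{v ∈ S.toFinset | knightClass v = (r, s)} := by
    intro r hr s hs
    have hcard : #{v : Fin n × Fin 2 | knightClass v = (r, s)} = (n + 1 - r) / 2 := by
      simpa using card_filter_knightClass (mem_range.1 hr) (mem_range.1 hs) (fun _ => True)
    have hbound := (KN n 2).card_le_mul_card_inter_of_forall_exists_adj KN_two_degree_le hdom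
      (C := {v | knightClass v = (r, s)})
      (fun v hv u hvu => by simpa [knightClass_eq_of_adj hvu] using hv)
    rw [hcard, inter_filter, inter_univ] at hbound
    omega
  rw [Set.ncard_eq_toFinset_card', card_eq_sum_card_knightClass]
  calc 2 * (((n + 1) / 2 + 2) / 3 + (n / 2 + 2) / 3)
      = ∑ r ∈ range 2, ∑ s ∈ range 2, ((n + 1 - r) / 2 + 2) / 3 := by
        simp only [sum_range_succ, sum_range_zero, zero_add]
        omega
    _ ≤ _ := sum_le_sum fun r hr => sum_le_sum fun s hs => hclass r hr s hs

theorem perfDomNum_KN_two (n : ℕ) :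
    perfDomNum (KN n 2) = 2 * (((n + 1) / 2 + 2) / 3 + (n / 2 + 2) / 3) :=
  perfDomNum_eq_of_isPerfDomSet
    (isPerfDomSet_KN_two_of_columns fun _ => isDomColumn_sub_two_iff_not_add_two)
    (ncard_setOf_isDomColumn n) fun _ => le_ncard_of_isPerfDomSet_KN_two

theorem stmt2_general (k n : ℕ) (h1 : 6 * k - 4 ≤ n) (h2 : n ≤ 6 * k) :
    perfDomNum (KN n 2) = 4 * k := by
  rw [perfDomNum_KN_two]
  omega

theorem stmt2 (k n : ℕ) (hk : 1 ≤ k) (h1 : 6 * k - 4 ≤ n) (h2 : n ≤ 6 * k) :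
    perfDomNum (KN n 2) = 4 * k :=
  stmt2_general k n h1 h2
end

section
/- For every k ≥ 1, the perfect domination number of the 8k×3 knights graph is at most 10k. -/
/-
Repeat along the board, block after block of 8 columns, the 10-cell pattern `block` in an
8 × 3 block. Every cell outside the code is a knight's move away from exactly one code cell:
since the code is 8-periodic, this is a finite check on the residue of the cell's column.
-/

def knightMoves : Finset (ℤ × ℤ) :=
  {(1, 2), (1, -2), (-1, 2), (-1, -2), (2, 1), (2, -1), (-2, 1), (-2, -1)}

lemma knightAdj_iff_sub_mem_knightMoves (p q : ℤ × ℤ) :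
    knightAdj p q ↔ q - p ∈ knightMoves := by
  obtain ⟨a, b⟩ := p
  obtain ⟨c, d⟩ := q
  simp only [knightAdj, knightMoves, abs_eq (by norm_num : (0 : ℤ) ≤ 1),
    abs_eq (by norm_num : (0 : ℤ) ≤ 2), Prod.mk_sub_mk, Finset.mem_insert,
    Finset.mem_singleton, Prod.mk.injEq]
  omega

section Board

variable {n m : ℕ}

def boardPt (p : Fin n × Fin m) : ℤ × ℤ := ((p.1 : ℤ), (p.2 : ℤ))

lemma boardPt_injective : Function.Injective (boardPt (n := n) (m := m)) := by
  rintro ⟨a, b⟩ ⟨c, d⟩ h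
  simp_all [boardPt, Prod.ext_iff, Fin.ext_iff]

lemma mem_range_boardPt {x : ℤ × ℤ} :
    x ∈ Set.range (boardPt (n := n) (m := m)) ↔ (0 ≤ x.1 ∧ x.1 < n) ∧ (0 ≤ x.2 ∧ x.2 < m) := by
  constructor
  · rintro ⟨⟨a, b⟩, rfl⟩
    simp only [boardPt]
    omega
  · rintro ⟨⟨h₁, h₂⟩, h₃, h₄⟩
    refine ⟨(⟨x.1.toNat, by omega⟩, ⟨x.2.toNat, by omega⟩), ?_⟩
    simp only [boardPt, Prod.ext_iff]
    omega

lemma KN_adj_iff (p q : Fin n × Fin m) :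
    (KN n m).Adj p q ↔ boardPt q - boardPt p ∈ knightMoves :=
  knightAdj_iff_sub_mem_knightMoves _ _

end Board

def block : Finset (ℤ × ℤ) :=
  {(0, 1), (2, 0), (2, 1), (2, 2), (3, 0), (4, 1), (4, 2), (5, 0), (6, 0), (6, 2)}

lemma bounds_of_mem_block : ∀ c ∈ block, (0 ≤ c.1 ∧ c.1 < 8) ∧ (0 ≤ c.2 ∧ c.2 < 3) := by
  decide

/- The dominator of a cell lies in the cell's own block (`0 ≤ r + d.1 < 8`), so the periodic
code needs no correction at the two ends of the board. -/
lemma exists_unique_block_dominator :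
    ∀ r ∈ Finset.Ico (0 : ℤ) 8, ∀ b ∈ Finset.Ico (0 : ℤ) 3, (r, b) ∉ block →
      ∃ d ∈ knightMoves, (0 ≤ r + d.1 ∧ r + d.1 < 8) ∧
        ∀ d' ∈ knightMoves, ((r + d'.1) % 8, b + d'.2) ∈ block ↔ d' = d := by
  decide

def stripCode (k : ℕ) : Finset (ℤ × ℤ) :=
  (Finset.range k ×ˢ block).image fun ic => (8 * (ic.1 : ℤ) + ic.2.1, ic.2.2)

lemma card_stripCode (k : ℕ) : (stripCode k).card = 10 * k := by
  rw [stripCode, Finset.card_image_of_injOn, Finset.card_product, Finset.card_range,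
    mul_comm]
  · rfl
  rintro ⟨i, c⟩ hic ⟨j, e⟩ hje h
  have hc := bounds_of_mem_block c (Finset.mem_product.1 hic).2
  have he := bounds_of_mem_block e (Finset.mem_product.1 hje).2
  simp only [Prod.ext_iff] at h hc he ⊢
  omega

lemma mem_stripCode {k : ℕ} {x : ℤ × ℤ} :
    x ∈ stripCode k ↔ (0 ≤ x.1 ∧ x.1 < 8 * k) ∧ (x.1 % 8, x.2) ∈ block := by
  constructor
  · simp only [stripCode, Finset.mem_image, Finset.mem_product, Finset.mem_range]
    rintro ⟨⟨i, c⟩, ⟨hi, hc⟩, rfl⟩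
    dsimp only
    have hc' := bounds_of_mem_block c hc
    have hmod : (8 * (i : ℤ) + c.1) % 8 = c.1 := by omega
    refine ⟨by omega, ?_⟩
    rwa [hmod]
  · rintro ⟨hx, hb⟩
    refine Finset.mem_image.2 ⟨((x.1 / 8).toNat, (x.1 % 8, x.2)),
      Finset.mem_product.2 ⟨Finset.mem_range.2 (by omega), hb⟩, ?_⟩
    exact Prod.ext (by dsimp only; omega) rfl

lemma isPerfDomSet_stripCode (k : ℕ) :
    IsPerfDomSet (KN (8 * k) 3) (boardPt ⁻¹' stripCode k) := by
  intro p hp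
  set x := boardPt p
  have hx : (0 ≤ x.1 ∧ x.1 < (8 * k : ℕ)) ∧ (0 ≤ x.2 ∧ x.2 < (3 : ℕ)) :=
    mem_range_boardPt.1 ⟨p, rfl⟩
  push_cast at hx
  have hxb : (x.1 % 8, x.2) ∉ block := fun h => hp (mem_stripCode.2 ⟨hx.1, h⟩)
  obtain ⟨d, hd, hd_block, hd_unique⟩ := exists_unique_block_dominator (x.1 % 8)
    (Finset.mem_Ico.2 (by omega)) x.2 (Finset.mem_Ico.2 hx.2) hxb
  have hdom : ((x.1 + d.1) % 8, x.2 + d.2) ∈ block := by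
    rw [← Int.emod_add_emod]
    exact (hd_unique d hd).2 rfl
  have mem_and_adj_iff : ∀ q, (q ∈ boardPt ⁻¹' stripCode k ∧ (KN (8 * k) 3).Adj p q) ↔ boardPt q = x + d := by
    intro q
    rw [Set.mem_preimage, KN_adj_iff, Finset.mem_coe, mem_stripCode]
    constructor
    · rintro ⟨⟨-, hq⟩, hadj⟩
      have : boardPt q - x = d := by
        refine (hd_unique _ hadj).1 ?_
        rwa [Int.emod_add_emod, Prod.fst_sub, Prod.snd_sub, add_sub_cancel, add_sub_cancel]
      rw [← this, add_sub_cancel]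
    · intro hq
      have hq' := mem_range_boardPt.1 ⟨q, rfl⟩
      push_cast at hq'
      rw [hq, add_sub_cancel_left]
      exact ⟨⟨hq.symm ▸ hq'.1, hdom⟩, hd⟩
  obtain ⟨q, hq⟩ : x + d ∈ Set.range (boardPt (n := 8 * k) (m := 3)) := by
    have := bounds_of_mem_block _ hdom
    rw [mem_range_boardPt, Prod.fst_add, Prod.snd_add]
    push_cast
    omega
  refine ⟨q, (mem_and_adj_iff q).2 hq, fun q' hq' => boardPt_injective ?_⟩
  rw [(mem_and_adj_iff q').1 hq', hq]

lemma ncard_preimage_stripCode (k : ℕ) :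
    (boardPt ⁻¹' (stripCode k : Set (ℤ × ℤ)) : Set (Fin (8 * k) × Fin 3)).ncard = 10 * k := by
  rw [Set.ncard_preimage_of_injective_subset_range boardPt_injective, Set.ncard_coe_finset,
    card_stripCode]
  intro x hx
  have := bounds_of_mem_block _ (mem_stripCode.1 hx).2
  rw [mem_range_boardPt]
  push_cast
  have := (mem_stripCode.1 hx).1
  omega

theorem stmt3_general (k : ℕ) : perfDomNum (KN (8 * k) 3) ≤ 10 * k :=
  Nat.sInf_le ⟨_, isPerfDomSet_stripCode k, ncard_preimage_stripCode k⟩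

theorem stmt3 (k : ℕ) (hk : 1 ≤ k) : perfDomNum (KN (8 * k) 3) ≤ 10 * k :=
  stmt3_general k
end

section
/- For every k ≥ 0, the perfect domination number of the (8k+4)×3 knights graph is at most 10k+6. -/
/-! The dominating set is periodic with period 8 along the long side. In every block of eight
columns it takes the columns `≡ 0, 2, 4 (mod 8)` of row 2, `≡ 2, 4, 6` of row 1 and
`≡ 0, 1, 3, 4` of row 0, ten squares; the last four columns carry the first half of a block,
six squares, except that in the very last column the square of row 0 is moved to row 2.
Every other square is attacked by exactly one of these, which is checked residue by residue
modulo 8, and the count is ten per block plus six. -/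

open Finset

theorem KNNN_adj_iff {a b c d : ℕ} :
    KNNN.Adj (a, b) (c, d) ↔
      (a + 1 = c ∨ c + 1 = a) ∧ (b + 2 = d ∨ d + 2 = b) ∨
        (a + 2 = c ∨ c + 2 = a) ∧ (b + 1 = d ∨ d + 1 = b) := by
  simp only [KNNN, knightAdj]
  rcases abs_cases ((a : ℤ) - c) with ⟨h₁, _⟩ | ⟨h₁, _⟩ <;>
    rcases abs_cases ((b : ℤ) - d) with ⟨h₂, _⟩ | ⟨h₂, _⟩ <;>
    rw [h₁, h₂] <;> omega

theorem isPerfDomSet_KN_of {n m : ℕ} {P : ℕ → ℕ → Prop}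
    (h : ∀ c < n, ∀ r < m, ¬ P c r →
      ∃! q : ℕ × ℕ, (q.1 < n ∧ q.2 < m ∧ P q.1 q.2) ∧ KNNN.Adj (c, r) q) :
    IsPerfDomSet (KN n m) {v | P v.1 v.2} := by
  intro v hv
  obtain ⟨q, ⟨⟨hq₁, hq₂, hPq⟩, hadj⟩, huniq⟩ := h v.1 v.1.isLt v.2 v.2.isLt hv
  refine ⟨(⟨q.1, hq₁⟩, ⟨q.2, hq₂⟩), ⟨hPq, hadj⟩, ?_⟩
  rintro ⟨c, r⟩ ⟨hP, hadj'⟩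
  have := huniq (c, r) ⟨⟨c.isLt, r.isLt, hP⟩, hadj'⟩
  ext <;> simp [← this]

theorem ncard_setOf_fin_prod {n m : ℕ} (P : ℕ → ℕ → Prop) [DecidableRel P] :
    {v : Fin n × Fin m | P v.1 v.2}.ncard = ∑ c ∈ range n, ((range m).filter (P c)).card := by
  rw [Set.ncard_eq_toFinset_card', Set.toFinset_ofPred, card_filter, Fintype.sum_prod_type,
    Fin.sum_univ_eq_sum_range (fun c => ∑ r : Fin m, if P c r then 1 else 0)]
  refine sum_congr rfl fun c _ => ?_
  rw [card_filter, Fin.sum_univ_eq_sum_range (fun r => if P c r then 1 else 0)]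

def knightPattern (k c r : ℕ) : Prop :=
  r = 2 ∧ (c % 8 = 0 ∨ c % 8 = 2 ∨ c % 8 = 4 ∨ c = 8 * k + 3) ∨
  r = 1 ∧ (c % 8 = 2 ∨ c % 8 = 4 ∨ c % 8 = 6) ∨
  r = 0 ∧ (c % 8 = 0 ∨ c % 8 = 1 ∨ c % 8 = 4 ∨ c % 8 = 3 ∧ c ≠ 8 * k + 3)

instance (k : ℕ) : DecidableRel (knightPattern k) := fun _ _ => by
  unfold knightPattern; infer_instance

-- The last case, reached only by squares of the pattern, is a junk value.
def knightDominator (k c r : ℕ) : ℕ × ℕ :=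
  match r, c % 8 with
  | 0, 2 => if c = 8 * k + 2 then (c + 1, 2) else (c + 2, 1)
  | 0, 3 => (c - 1, 2)
  | 0, 5 => (c - 1, 2)
  | 0, 6 => (c - 2, 1)
  | 0, 7 => (c + 1, 2)
  | 1, 0 => (c + 2, 2)
  | 1, 1 => if c = 8 * k + 1 then (c + 2, 2) else (c + 2, 0)
  | 1, 3 => (c - 2, 0)
  | 1, 5 => (c - 2, 0)
  | 1, 7 => (c + 2, 0)
  | 2, 1 => (c - 1, 0)
  | 2, 3 => (c + 1, 0)
  | 2, 5 => (c - 1, 0)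
  | 2, 6 => (c - 2, 1)
  | 2, 7 => (c + 1, 0)
  | _, _ => (c, r)

theorem knightDominator_spec {k c r : ℕ} (hc : c < 8 * k + 4) (hr : r < 3)
    (h : ¬ knightPattern k c r) :
    ((knightDominator k c r).1 < 8 * k + 4 ∧ (knightDominator k c r).2 < 3 ∧
      knightPattern k (knightDominator k c r).1 (knightDominator k c r).2) ∧
      KNNN.Adj (c, r) (knightDominator k c r) := by
  have hr : r = 0 ∨ r = 1 ∨ r = 2 := by omega
  have hc8 : c % 8 = 0 ∨ c % 8 = 1 ∨ c % 8 = 2 ∨ c % 8 = 3 ∨ c % 8 = 4 ∨ c % 8 = 5 ∨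
    c % 8 = 6 ∨ c % 8 = 7 := by omega
  rcases hr with rfl | rfl | rfl <;>
    rcases hc8 with hc8 | hc8 | hc8 | hc8 | hc8 | hc8 | hc8 | hc8 <;>
    simp only [knightDominator, hc8] <;> (try split_ifs) <;>
    dsimp only [knightPattern] at h ⊢ <;> rw [KNNN_adj_iff] <;> omega

theorem knightPattern_neighbor_unique {k c r : ℕ} (hr : r < 3)
    (h : ¬ knightPattern k c r) {q₁ q₂ : ℕ × ℕ}
    (h₁ : (q₁.1 < 8 * k + 4 ∧ q₁.2 < 3 ∧ knightPattern k q₁.1 q₁.2) ∧ KNNN.Adj (c, r) q₁)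
    (h₂ : (q₂.1 < 8 * k + 4 ∧ q₂.2 < 3 ∧ knightPattern k q₂.1 q₂.2) ∧ KNNN.Adj (c, r) q₂) :
    q₁ = q₂ := by
  obtain ⟨c₁, r₁⟩ := q₁
  obtain ⟨c₂, r₂⟩ := q₂
  simp only [knightPattern, KNNN_adj_iff] at h h₁ h₂
  simp only [Prod.mk.injEq]
  omega

theorem isPerfDomSet_knightPattern (k : ℕ) :
    IsPerfDomSet (KN (8 * k + 4) 3) {v | knightPattern k v.1 v.2} :=
  isPerfDomSet_KN_of fun _ hc _ hr h =>
    ⟨_, knightDominator_spec hc hr h, fun _ hq =>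
      knightPattern_neighbor_unique hr h hq (knightDominator_spec hc hr h)⟩

theorem knightPattern_succ_eight_add {k c r : ℕ} :
    knightPattern (k + 1) (8 + c) r ↔ knightPattern k c r := by
  unfold knightPattern
  omega

theorem knightPattern_succ_of_lt_eight {k c r : ℕ} (hc : c < 8) :
    knightPattern (k + 1) c r ↔ knightPattern 1 c r := by
  unfold knightPattern
  omega

theorem sum_card_knightPattern (k : ℕ) :
    ∑ c ∈ range (8 * k + 4), ((range 3).filter (knightPattern k c)).card = 10 * k + 6 := by
  induction k with
  | zero => decide
  | succ k ih =>
    have hfirst : ∑ c ∈ range 8, ((range 3).filter (knightPattern (k + 1) c)).card = 10 :=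
      calc _ = ∑ c ∈ range 8, ((range 3).filter (knightPattern 1 c)).card :=
            sum_congr rfl fun c hc => by
              simp only [knightPattern_succ_of_lt_eight (mem_range.1 hc)]
        _ = 10 := by decide
    rw [show 8 * (k + 1) + 4 = 8 + (8 * k + 4) by ring, sum_range_add, hfirst]
    simp only [knightPattern_succ_eight_add, ih]
    ring

theorem stmt4 (k : ℕ) : perfDomNum (KN (8 * k + 4) 3) ≤ 10 * k + 6 := by
  refine Nat.sInf_le ⟨_, isPerfDomSet_knightPattern k, ?_⟩
  rw [ncard_setOf_fin_prod, sum_card_knightPattern]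
end

section
/- The perfect domination number of the 7×4 knights graph equals 28; that is, the only perfect dominating set of KN_{7,4} is the entire vertex set. -/
/-!
An exhaustive search over the `2 ^ 28` subsets, pruned by the two local obstructions to perfect
domination: a vertex outside `S` with two neighbours in `S`, or with all of its neighbours
outside `S`. Deciding membership cell by cell and discarding a branch as soon as one of these
obstructions appears around the last decided cell leaves about two thousand partial
assignments, few enough for the kernel to evaluate.
-/

open Function

instance : DecidableRel knightAdj := fun _ _ => by unfold knightAdj; infer_instance

instance inst_s11 (n m : ℕ) : DecidableRel (KN n m).Adj := fun _ _ => inferInstanceAs (Decidable (knightAdj _ _))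

theorem isPerfDomSet_univ {V : Type*} (G : SimpleGraph V) : IsPerfDomSet G Set.univ :=
  fun v hv => absurd (Set.mem_univ v) hv

theorem perfDomNum_eq_card_of_forall_eq_univ {V : Type*} [Finite V] {G : SimpleGraph V}
    (h : ∀ S, IsPerfDomSet G S → S = Set.univ) : perfDomNum G = Nat.card V := by
  have hset : {k | ∃ S : Set V, IsPerfDomSet G S ∧ S.ncard = k} = {Nat.card V} := by
    ext k
    constructor
    · rintro ⟨S, hS, rfl⟩
      rw [h S hS, Set.ncard_univ, Set.mem_singleton_iff]
    · rintro rfl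
      exact ⟨Set.univ, isPerfDomSet_univ G, Set.ncard_univ V⟩
  rw [perfDomNum, hset, csInf_singleton]

namespace PerfDomSearch

variable {V : Type*} (G : SimpleGraph V) [DecidableRel G.Adj] (all : List V)

def Consistent (σ : V → Option Bool) (S : Set V) : Prop :=
  ∀ v b, σ v = some b → (v ∈ S ↔ b = true)

def nbrs (v : V) : List V :=
  all.filter (G.Adj v ·)

def violated (σ : V → Option Bool) (v : V) : Bool :=
  σ v == some false &&
    (1 < (nbrs G all v).countP (σ · == some true) || (nbrs G all v).all (σ · == some false))

def searchAllTrue [DecidableEq V] : List V → (V → Option Bool) → Bool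
  | [], σ => all.all (σ · == some true) || all.any (violated G all σ)
  | v :: l, σ => [true, false].all fun b =>
      let σ' := update σ v (some b)
      -- deciding `v` can only create an obstruction at `v` or at a neighbour of `v`
      violated G all σ' v || (nbrs G all v).any (violated G all σ') || searchAllTrue l σ'

variable {G all}

theorem Consistent.update [DecidableEq V] {σ : V → Option Bool} {S : Set V}
    (hσ : Consistent σ S) {v : V} {b : Bool} (hb : v ∈ S ↔ b = true) :
    Consistent (update σ v (some b)) S := by
  intro u c hu
  by_cases huv : u = v
  · subst huv
    rw [update_self, Option.some_inj] at hu
    exact hu ▸ hb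
  · rw [update_of_ne huv] at hu
    exact hσ u c hu

theorem mem_nbrs (hall : ∀ v, v ∈ all) {v u : V} : u ∈ nbrs G all v ↔ G.Adj v u := by
  simp [nbrs, hall]

theorem violated_eq_false (hall : ∀ v, v ∈ all) (hnd : all.Nodup) {S : Set V}
    (hS : IsPerfDomSet G S) {σ : V → Option Bool} (hσ : Consistent σ S) (v : V) :
    violated G all σ v = false := by
  by_contra hviol
  simp only [violated, Bool.not_eq_false, Bool.and_eq_true, beq_iff_eq, Bool.or_eq_true,
    decide_eq_true_eq, List.all_eq_true] at hviol
  obtain ⟨hσv, hdom⟩ := hviol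
  have hvS : v ∉ S := by simpa using hσ v false hσv
  obtain ⟨u, ⟨huS, hvu⟩, huniq⟩ := hS v hvS
  rcases hdom with htwo | hnone
  · have hsub : (nbrs G all v).filter (σ · == some true) ⊆ [u] := by
      intro w hw
      rw [List.mem_filter, beq_iff_eq, mem_nbrs hall] at hw
      exact List.mem_singleton.2 (huniq w ⟨(hσ w true hw.2).2 rfl, hw.1⟩)
    have hnd' : (nbrs G all v).Nodup := hnd.filter _
    have hle : ((nbrs G all v).filter (σ · == some true)).length ≤ 1 :=
      ((hnd'.filter _).subperm hsub).length_le
    rw [List.countP_eq_length_filter] at htwo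
    omega
  · have := hσ u false (hnone u ((mem_nbrs hall).2 hvu))
    simp_all

theorem eq_univ_of_searchAllTrue [DecidableEq V] (hall : ∀ v, v ∈ all) (hnd : all.Nodup)
    {S : Set V} (hS : IsPerfDomSet G S) :
    ∀ (l : List V) (σ : V → Option Bool), searchAllTrue G all l σ = true → Consistent σ S →
      S = Set.univ
  | [], σ, hsearch, hσ => by
    simp only [searchAllTrue, Bool.or_eq_true, List.all_eq_true, List.any_eq_true,
      violated_eq_false hall hnd hS hσ, beq_iff_eq] at hsearch
    rcases hsearch with htrue | ⟨_, _, hfalse⟩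
    · exact Set.eq_univ_of_forall fun v => (hσ v true (htrue v (hall v))).2 rfl
    · exact absurd hfalse Bool.false_ne_true
  | v :: l, σ, hsearch, hσ => by
    have hbranch : ∀ b, (v ∈ S ↔ b = true) → S = Set.univ := by
      intro b hb
      have hσ' := hσ.update hb
      have hsearch' := List.all_eq_true.1 hsearch b (by cases b <;> simp)
      simp only [violated_eq_false hall hnd hS hσ', Bool.false_or, Bool.or_eq_true,
        List.any_eq_true, Bool.false_eq_true, and_false, exists_false, false_or] at hsearch'
      exact eq_univ_of_searchAllTrue hall hnd hS l _ hsearch' hσ'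
    by_cases hv : v ∈ S
    · exact hbranch true (iff_of_true hv rfl)
    · exact hbranch false (iff_of_false hv Bool.false_ne_true)

end PerfDomSearch

open PerfDomSearch in
theorem KN74_eq_univ_of_isPerfDomSet {S : Set (Fin 7 × Fin 4)} (hS : IsPerfDomSet (KN 7 4) S) :
    S = Set.univ :=
  eq_univ_of_searchAllTrue (by simp) ((List.nodup_finRange 7).product (List.nodup_finRange 4)) hS
    (List.finRange 7 ×ˢ List.finRange 4) (fun _ => none) (by decide +kernel) (fun _ _ h => nomatch h)

theorem stmt11 :
    perfDomNum (KN 7 4) = 28 ∧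
    ∀ S : Set (Fin 7 × Fin 4), IsPerfDomSet (KN 7 4) S → S = Set.univ :=
  ⟨(perfDomNum_eq_card_of_forall_eq_univ fun _ => KN74_eq_univ_of_isPerfDomSet).trans (by simp),
    fun _ => KN74_eq_univ_of_isPerfDomSet⟩
end
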